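/- arXiv:0909.3367 — 3 statements merged into one kernel-verified Lean document; each statement's English description precedes it below -/
import Mathlib

section
/- (Generic singularities, Case 23) Let α, β, c ∈ ℂ satisfy (α + 2β)·c^2 + (2α + 3β) = 0. Then the point η := (1,1,1,−1,−1,−1,c,c,−c,−c) ∈ ℂ^{10} satisfies S_1(η) = 0 and there exists μ ∈ ℂ with (∂F_{α,β}/∂x_i)(η) = μ for all i = 0,…,9; that is, η is a singular point of the hyperquintic Q_{(α:β)} in ℙ^8(ℂ). -/
/-!
The partial derivatives of the elementary symmetric polynomials satisfy
`∂ᵢ S_{n+1} = ∑_{j ≤ n} (-xᵢ)ʲ S_{n-j}`: removing the variable `xᵢ` from the multiset of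
variables gives `S_{n+1} = S'_{n+1} + xᵢ S'_n`, where `S'` does not involve `xᵢ`, and this
recursion can be inverted. At a point where `S₁` and `S₃` vanish, `∂ᵢ F_{α,β}` is therefore a
polynomial `g(xᵢ²)`. For `η` we have `ηᵢ² ∈ {1, c²}`, and
`g(c²) - g(1) = (1 - c²)·((α + 2β)c² + 2α + 3β) = 0`.
-/

open MvPolynomial

namespace Multiset

variable {R : Type*}

section CommSemiring

variable [CommSemiring R]

@[simp]
theorem esymm_zero_right (s : Multiset R) : s.esymm 0 = 1 := by
  simp [esymm]

@[simp]
theorem esymm_zero_left_succ (n : ℕ) : (0 : Multiset R).esymm (n + 1) = 0 := by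
  simp [esymm, powersetCard_zero_right]

theorem esymm_cons_succ (a : R) (s : Multiset R) (n : ℕ) :
    (a ::ₘ s).esymm (n + 1) = s.esymm (n + 1) + a * s.esymm n := by
  simp [esymm, powersetCard_cons, map_map, sum_map_mul_left]

end CommSemiring

theorem esymm_eq_sum_neg_pow_mul_esymm_cons [CommRing R] (a : R) (s : Multiset R) (n : ℕ) :
    s.esymm n = ∑ j ∈ Finset.range (n + 1), (-a) ^ j * (a ::ₘ s).esymm (n - j) := by
  induction n with
  | zero => simp
  | succ n ih =>
    calc s.esymm (n + 1) = (a ::ₘ s).esymm (n + 1) + -a * s.esymm n := by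
          rw [esymm_cons_succ]; ring
      _ = _ := by
          rw [ih, Finset.sum_range_succ' _ (n + 1), Finset.mul_sum, add_comm]
          simp only [Nat.add_sub_add_right, pow_zero, one_mul, Nat.sub_zero]
          exact congrArg (· + _) (Finset.sum_congr rfl fun j _ => by ring)

end Multiset

theorem Derivation.map_esymm_eq_zero {R A M : Type*} [CommSemiring R] [CommSemiring A]
    [AddCommMonoid M] [Algebra R A] [Module A M] [Module R M] (D : Derivation R A M)
    {s : Multiset A} (hs : ∀ a ∈ s, D a = 0) (n : ℕ) : D (s.esymm n) = 0 := by
  induction s using Multiset.induction_on generalizing n with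
  | empty => cases n <;> simp
  | cons a s ih =>
    cases n with
    | zero => simp
    | succ n =>
      have hs' : ∀ b ∈ s, D b = 0 := fun b hb => hs b (Multiset.mem_cons_of_mem hb)
      simp [Multiset.esymm_cons_succ, ih hs', hs a (Multiset.mem_cons_self a s)]

namespace MvPolynomial

theorem pderiv_esymm_succ {σ R : Type*} [Fintype σ] [CommRing R] (i : σ) (n : ℕ) :
    pderiv i (esymm σ R (n + 1)) =
      ∑ j ∈ Finset.range (n + 1), (-X i) ^ j * esymm σ R (n - j) := by
  classical
  set s := (Finset.univ.erase i).val.map (X : σ → MvPolynomial σ R)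
  have hcons : (Finset.univ.val.map X : Multiset (MvPolynomial σ R)) = X i ::ₘ s := by
    rw [← Multiset.map_cons, ← Finset.insert_val_of_notMem (Finset.notMem_erase i _),
      Finset.insert_erase (Finset.mem_univ i)]
  have hs : ∀ p ∈ s, pderiv i p = 0 := by
    simp only [s, Multiset.mem_map, Finset.mem_val, Finset.mem_erase]
    rintro _ ⟨j, ⟨hji, -⟩, rfl⟩
    exact pderiv_X_of_ne hji
  simp only [esymm_eq_multiset_esymm, hcons, Multiset.esymm_cons_succ, map_add,
    Derivation.leibniz, (pderiv i).map_esymm_eq_zero hs, pderiv_X_self, smul_eq_mul, mul_zero,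
    mul_one, zero_add]
  exact s.esymm_eq_sum_neg_pow_mul_esymm_cons (X i) n

theorem eval_pderiv_esymm_succ {σ R : Type*} [Fintype σ] [CommRing R] (x : σ → R) (i : σ)
    (n : ℕ) : eval x (pderiv i (esymm σ R (n + 1))) =
      ∑ j ∈ Finset.range (n + 1), (-x i) ^ j * eval x (esymm σ R (n - j)) := by
  simp [pderiv_esymm_succ]

theorem eval_pderiv_hyperquintic {σ R : Type*} [Fintype σ] [CommRing R] (α β : R) (x : σ → R)
    (i : σ) (h₁ : eval x (esymm σ R 1) = 0) (h₃ : eval x (esymm σ R 3) = 0) :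
    eval x (pderiv i (C α * esymm σ R 5 + C β * (esymm σ R 2 * esymm σ R 3))) =
      α * (eval x (esymm σ R 4) + eval x (esymm σ R 2) * x i ^ 2 + (x i ^ 2) ^ 2) +
        β * eval x (esymm σ R 2) * (eval x (esymm σ R 2) + x i ^ 2) := by
  simp only [map_add, map_mul, pderiv_mul, pderiv_C, eval_C, eval_pderiv_esymm_succ,
    Finset.sum_range_succ, Finset.sum_range_zero, Nat.reduceAdd, Nat.reduceSub, esymm_zero,
    map_zero, map_one, h₁, h₃]
  ring

end MvPolynomial

/-- **Case 23, generic singularities.** If `(α + 2β)·c² + (2α + 3β) = 0`, then the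
point `η = (1,1,1,−1,−1,−1,c,c,−c,−c)` satisfies `S₁(η) = 0` and is a singular point of the
hyperquintic `Q_{(α:β)} = {α·S₅ + β·S₂·S₃ = 0}` in `ℙ⁸(ℂ)`. -/
theorem case23_generic_singularity (α β c : ℂ)
    (hc : (α + 2 * β) * c ^ 2 + (2 * α + 3 * β) = 0) (η : Fin 10 → ℂ)
    (hη : η = ![1, 1, 1, -1, -1, -1, c, c, -c, -c]) :
    eval η (esymm (Fin 10) ℂ 1) = 0 ∧
    ∃ μ : ℂ, ∀ i, eval η (pderiv i
      (C α * esymm (Fin 10) ℂ 5 + C β * (esymm (Fin 10) ℂ 2 * esymm (Fin 10) ℂ 3))) = μ := by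
  have hS : ∀ k, eval η (esymm (Fin 10) ℂ k) =
      (1 ::ₘ 1 ::ₘ 1 ::ₘ -1 ::ₘ -1 ::ₘ -1 ::ₘ c ::ₘ c ::ₘ -c ::ₘ -c ::ₘ 0).esymm k := by
    intro k
    rw [← aeval_eq_eval, aeval_esymm_eq_multiset_esymm, Fin.univ_val_map, hη]
    rfl
  obtain ⟨hS₁, hS₂, hS₃, hS₄⟩ : eval η (esymm (Fin 10) ℂ 1) = 0 ∧
      eval η (esymm (Fin 10) ℂ 2) = -3 - 2 * c ^ 2 ∧ eval η (esymm (Fin 10) ℂ 3) = 0 ∧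
      eval η (esymm (Fin 10) ℂ 4) = 3 + 6 * c ^ 2 + c ^ 4 := by
    simp only [hS, Multiset.esymm_cons_succ, Multiset.esymm_zero_right,
      Multiset.esymm_zero_left_succ]
    exact ⟨by ring, by ring, by ring, by ring⟩
  have hsq : ∀ i, η i ^ 2 = 1 ∨ η i ^ 2 = c ^ 2 := by
    subst hη
    intro i
    fin_cases i <;> simp
  refine ⟨hS₁, α * (1 + 4 * c ^ 2 + c ^ 4) + β * (3 + 2 * c ^ 2) * (2 + 2 * c ^ 2), fun i => ?_⟩
  rcases hsq i with h | h <;> rw [eval_pderiv_hyperquintic α β η i hS₁ hS₃, hS₂, hS₄, h]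
  · ring
  · linear_combination (1 - c ^ 2) * hc
end

section
/- (Case 2) Let α, β ∈ ℂ with (α, β) ≠ (0, 0), and let η := (1,1,1,1,1,1,1,1,1,−9) ∈ ℂ^{10}. Then there exists μ ∈ ℂ with (∂F_{α,β}/∂x_i)(η) = μ for all i = 0,…,9 if and only if 7α = 75β; that is, η is a singular point of the hyperquintic Q_{(α:β)} exactly for (α : β) = (75 : 7). -/
/-!
Since `∂S_{k+1}/∂x_i` is the `k`-th elementary symmetric polynomial in the variables other than
`x_i`, the partial derivatives of `S₂`, `S₃`, `S₅` at `η` are elementary symmetric functions of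
`(1,…,1,−9)` with one entry removed: removing `x₉` leaves nine ones, removing any other entry
leaves eight ones and `−9`. With `S₂(η) = −45` and `S₃(η) = −240` this gives
`∂F/∂x_i(η) = −434α + 2220β` for `i ≤ 8` and `∂F/∂x₉(η) = 126α − 3780β`; these agree iff
`560α = 6000β`, i.e. `7α = 75β`.
-/

open MvPolynomial Finset

namespace MvPolynomial

variable {σ R : Type*} [CommRing R] [DecidableEq σ]

theorem pderiv_prod_X_of_notMem {i : σ} {t : Finset σ} (hi : i ∉ t) :
    pderiv i (∏ j ∈ t, X j : MvPolynomial σ R) = 0 := by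
  induction t using Finset.induction_on with
  | empty => simp
  | insert a s ha ih =>
    rw [prod_insert ha, pderiv_mul, pderiv_X_of_ne (ne_of_mem_of_not_mem (mem_insert_self a s) hi),
      ih fun h => hi (mem_insert_of_mem h), zero_mul, mul_zero, add_zero]

theorem pderiv_sum_powersetCard_insert {i : σ} {s : Finset σ} (hi : i ∉ s) (k : ℕ) :
    pderiv i (∑ t ∈ powersetCard (k + 1) (insert i s), ∏ j ∈ t, X j : MvPolynomial σ R) =
      ∑ t ∈ powersetCard k s, ∏ j ∈ t, X j := by
  have hdisj : Disjoint (powersetCard (k + 1) s) ((powersetCard k s).image (insert i)) := by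
    simp only [disjoint_left, mem_image, mem_powersetCard]
    rintro _ ⟨hts, -⟩ ⟨u, -, rfl⟩
    exact hi (hts (mem_insert_self i u))
  have hinj : Set.InjOn (insert i) (powersetCard k s : Set (Finset σ)) := fun u hu v hv huv => by
    have hiu : i ∉ u := fun h => hi ((mem_powersetCard.1 hu).1 h)
    have hiv : i ∉ v := fun h => hi ((mem_powersetCard.1 hv).1 h)
    rw [← erase_insert hiu, ← erase_insert hiv, huv]
  rw [powersetCard_succ_insert hi, sum_union hdisj, sum_image hinj, map_add, map_sum, map_sum,
    sum_eq_zero fun t ht => pderiv_prod_X_of_notMem fun h => hi ((mem_powersetCard.1 ht).1 h),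
    zero_add]
  refine sum_congr rfl fun t ht => ?_
  have hit : i ∉ t := fun h => hi ((mem_powersetCard.1 ht).1 h)
  rw [prod_insert hit, pderiv_mul, pderiv_X_self, pderiv_prod_X_of_notMem hit]
  ring

variable [Fintype σ]

theorem pderiv_esymm_succ_s6 (i : σ) (k : ℕ) :
    pderiv i (esymm σ R (k + 1)) = ∑ t ∈ powersetCard k (univ.erase i), ∏ j ∈ t, X j := by
  rw [esymm, ← pderiv_sum_powersetCard_insert (notMem_erase i univ), insert_erase (mem_univ i)]

theorem eval_pderiv_esymm_succ_s6 (x : σ → R) (i : σ) (k : ℕ) :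
    eval x (pderiv i (esymm σ R (k + 1))) =
      ∑ t ∈ powersetCard k (univ.erase i), ∏ j ∈ t, x j := by
  simp [pderiv_esymm_succ_s6]

omit [DecidableEq σ] in
theorem eval_esymm (x : σ → R) (k : ℕ) :
    eval x (esymm σ R k) = ∑ t ∈ powersetCard k univ, ∏ j ∈ t, x j := by
  simp [esymm]

end MvPolynomial

theorem exists_forall_ite_eq_iff {ι M : Type*} [DecidableEq ι] {i₀ i₁ : ι} (h : i₁ ≠ i₀)
    (a b : M) : (∃ μ, ∀ i, (if i = i₀ then a else b) = μ) ↔ a = b := by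
  constructor
  · rintro ⟨μ, hμ⟩
    simpa [h] using (hμ i₀).trans (hμ i₁).symm
  · rintro rfl
    exact ⟨a, fun i => ite_self a⟩

-- `η` with integer entries, so that the finite sums below can be evaluated by `decide`.
def etaInt : Fin 10 → ℤ := ![1, 1, 1, 1, 1, 1, 1, 1, 1, -9]

theorem intCast_etaInt : (fun j => (etaInt j : ℂ)) = ![1, 1, 1, 1, 1, 1, 1, 1, 1, -9] := by
  ext j; fin_cases j <;> simp [etaInt]

set_option maxRecDepth 10000 in
theorem sum_powersetCard_prod_etaInt :
    ∑ t ∈ powersetCard 2 univ, ∏ j ∈ t, etaInt j = -45 ∧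
      ∑ t ∈ powersetCard 3 univ, ∏ j ∈ t, etaInt j = -240 := by
  decide

set_option maxRecDepth 10000 in
theorem sum_powersetCard_erase_prod_etaInt (i : Fin 10) :
    (∑ t ∈ powersetCard 1 (univ.erase i), ∏ j ∈ t, etaInt j,
      ∑ t ∈ powersetCard 2 (univ.erase i), ∏ j ∈ t, etaInt j,
      ∑ t ∈ powersetCard 4 (univ.erase i), ∏ j ∈ t, etaInt j) =
      if i = 9 then (9, 36, 126) else (-1, -44, -434) := by
  revert i; decide

theorem eval_pderiv_hyperquintic_etaInt (α β : ℂ) (i : Fin 10) :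
    eval (fun j => (etaInt j : ℂ)) (pderiv i
        (C α * esymm (Fin 10) ℂ 5 + C β * (esymm (Fin 10) ℂ 2 * esymm (Fin 10) ℂ 3))) =
      if i = 9 then 126 * α - 3780 * β else -434 * α + 2220 * β := by
  obtain ⟨hS₂, hS₃⟩ := sum_powersetCard_prod_etaInt
  have hD := sum_powersetCard_erase_prod_etaInt i
  simp only [map_add, pderiv_mul, pderiv_C, eval_mul, eval_C, zero_mul, zero_add, eval_esymm,
    eval_pderiv_esymm_succ_s6, ← Int.cast_prod, ← Int.cast_sum, hS₂, hS₃]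
  split_ifs at hD ⊢ <;>
  · simp only [Prod.mk.injEq] at hD
    rw [hD.1, hD.2.1, hD.2.2]
    push_cast
    ring

theorem case2_singular_iff_general (α β : ℂ) (η : Fin 10 → ℂ)
    (hη : η = ![1, 1, 1, 1, 1, 1, 1, 1, 1, -9]) :
    (∃ μ : ℂ, ∀ i, eval η (pderiv i
        (C α * esymm (Fin 10) ℂ 5 + C β * (esymm (Fin 10) ℂ 2 * esymm (Fin 10) ℂ 3))) = μ)
      ↔ 7 * α = 75 * β := by
  rw [hη, ← intCast_etaInt]
  simp only [eval_pderiv_hyperquintic_etaInt,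
    exists_forall_ite_eq_iff (i₀ := (9 : Fin 10)) (i₁ := 0) (by decide)]
  constructor
  · intro h
    linear_combination h / 80
  · intro h
    linear_combination 80 * h

/-- **Case 2.** For `(α, β) ≠ (0, 0)`, the point `η = (1,…,1,−9)` is a singular
point of the hyperquintic `Q_{(α:β)} = {α·S₅ + β·S₂·S₃ = 0}` in `ℙ⁸(ℂ)` if and only if
`7α = 75β`, i.e. exactly for `(α : β) = (75 : 7)`. -/
theorem case2_singular_iff (α β : ℂ) (hαβ : (α, β) ≠ (0, 0)) (η : Fin 10 → ℂ)
    (hη : η = ![1, 1, 1, 1, 1, 1, 1, 1, 1, -9]) :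
    (∃ μ : ℂ, ∀ i, eval η (pderiv i
        (C α * esymm (Fin 10) ℂ 5 + C β * (esymm (Fin 10) ℂ 2 * esymm (Fin 10) ℂ 3))) = μ)
      ↔ 7 * α = 75 * β :=
  case2_singular_iff_general α β η hη
end

section
/- (Case 21: singular lines of Q_{(2:−1)}) For all b, c ∈ ℂ, the point η := (0,0,0,0,b,b,c,c,−b−c,−b−c) ∈ ℂ^{10} satisfies S_1(η) = 0 and there exists μ ∈ ℂ with (∂F_{2,−1}/∂x_i)(η) = μ for all i = 0,…,9; that is, the hyperquintic Q_{(2:−1)} = {2·S_5 − S_2·S_3 = 0} in ℙ^8(ℂ) is singular along all such points. -/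
/-!
Since `∂S_{m+1}/∂x_i = ∑_{j ≤ m} (-x_i)^j S_{m-j}`, the gradient of `2 S₅ - S₂ S₃` at a point `x`
with `S₁(x) = 0` has `i`-th entry `g(x_i)` for a quartic `g` whose coefficients are values `S_k(x)`.
At `η` one finds `S₂ = -2(b² + bc + c²)` and `S₃ = -2bc(b + c)`, whence
`g(t) - g(0) = 2t(t - b)(t - c)(t + b + c)`, which vanishes at every coordinate of `η`.
-/

open MvPolynomial

theorem Multiset.esymm_cons_succ_s11 {R : Type*} [CommSemiring R] (a : R) (s : Multiset R) (n : ℕ) :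
    (a ::ₘ s).esymm (n + 1) = s.esymm (n + 1) + a * s.esymm n := by
  simp only [Multiset.esymm, Multiset.powersetCard_cons, Multiset.map_add, Multiset.sum_add,
    Multiset.map_map, Function.comp_def, Multiset.prod_cons, Multiset.sum_map_mul_left]

@[simp]
theorem Multiset.esymm_zero_right_s11 {R : Type*} [CommSemiring R] (s : Multiset R) :
    s.esymm 0 = 1 := by
  simp [Multiset.esymm]

@[simp]
theorem Multiset.esymm_zero_left_succ_s11 {R : Type*} [CommSemiring R] (n : ℕ) :
    (0 : Multiset R).esymm (n + 1) = 0 := by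
  simp [Multiset.esymm, Multiset.powersetCard_zero_right]

namespace MvPolynomial

variable {σ R : Type*} [CommRing R]

theorem pderiv_esymm_map_X_of_notMem {i : σ} {s : Multiset σ} (hi : i ∉ s) (m : ℕ) :
    pderiv i ((s.map X).esymm m : MvPolynomial σ R) = 0 := by
  induction s using Multiset.induction_on generalizing m with
  | empty => cases m <;> simp
  | cons a s ih =>
    have hai : a ≠ i := fun h => hi (h ▸ Multiset.mem_cons_self a s)
    have hs : i ∉ s := fun h => hi (Multiset.mem_cons_of_mem h)
    cases m with
    | zero => simp
    | succ m =>
      rw [Multiset.map_cons, Multiset.esymm_cons_succ_s11, map_add, pderiv_mul, ih hs, ih hs,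
        pderiv_X_of_ne hai]
      simp

variable [Fintype σ] [DecidableEq σ]

theorem esymm_succ_eq_esymm_erase (i : σ) (m : ℕ) :
    esymm σ R (m + 1) = ((Finset.univ.val.erase i).map X).esymm (m + 1)
      + X i * ((Finset.univ.val.erase i).map X).esymm m := by
  conv_lhs => rw [esymm_eq_multiset_esymm, ← Multiset.cons_erase (Finset.mem_univ_val i),
    Multiset.map_cons, Multiset.esymm_cons_succ_s11]

theorem pderiv_esymm_succ_s11 (i : σ) (m : ℕ) :
    pderiv i (esymm σ R (m + 1)) = ((Finset.univ.val.erase i).map X).esymm m := by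
  have hi : i ∉ Finset.univ.val.erase i := Finset.univ.nodup.notMem_erase
  rw [esymm_succ_eq_esymm_erase i, map_add, pderiv_mul, pderiv_esymm_map_X_of_notMem hi,
    pderiv_esymm_map_X_of_notMem hi, pderiv_X_self]
  simp

theorem pderiv_esymm_succ_succ (i : σ) (m : ℕ) :
    pderiv i (esymm σ R (m + 2)) = esymm σ R (m + 1) - X i * pderiv i (esymm σ R (m + 1)) := by
  rw [pderiv_esymm_succ_s11, pderiv_esymm_succ_s11, esymm_succ_eq_esymm_erase i]
  ring

theorem pderiv_esymm_succ_eq_sum (i : σ) (m : ℕ) :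
    pderiv i (esymm σ R (m + 1)) = ∑ j ∈ Finset.range (m + 1), (-X i) ^ j * esymm σ R (m - j) := by
  induction m with
  | zero => simp
  | succ m ih =>
    rw [pderiv_esymm_succ_succ, ih, Finset.sum_range_succ' _ (m + 1), Finset.mul_sum]
    simp only [Nat.add_sub_add_right, pow_succ, Nat.sub_zero, pow_zero, one_mul]
    rw [sub_eq_add_neg, add_comm, ← Finset.sum_neg_distrib]
    congr 1
    exact Finset.sum_congr rfl fun j _ => by ring

theorem eval_pderiv_C_mul_esymm_five_add_C_mul_esymm_two_mul_esymm_three (x : σ → R) (i : σ)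
    (α β : R) :
    eval x (pderiv i (C α * esymm σ R 5 + C β * (esymm σ R 2 * esymm σ R 3))) =
      α * (eval x (esymm σ R 4) - x i * eval x (esymm σ R 3) + x i ^ 2 * eval x (esymm σ R 2)
          - x i ^ 3 * eval x (esymm σ R 1) + x i ^ 4)
        + β * ((eval x (esymm σ R 1) - x i) * eval x (esymm σ R 3)
          + eval x (esymm σ R 2)
            * (eval x (esymm σ R 2) - x i * eval x (esymm σ R 1) + x i ^ 2)) := by
  simp only [map_add, pderiv_mul, pderiv_esymm_succ_eq_sum i 4,
    pderiv_esymm_succ_eq_sum i 1, pderiv_esymm_succ_eq_sum i 2, Finset.sum_range_succ]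
  simp
  ring

end MvPolynomial

/-- **Case 21, singular lines of `Q_{(2:−1)}`.** For all `b, c ∈ ℂ`, the point
`η = (0,0,0,0,b,b,c,c,−b−c,−b−c)` satisfies `S₁(η) = 0` and is a singular point of the
hyperquintic `Q_{(2:−1)} = {2·S₅ − S₂·S₃ = 0}` in `ℙ⁸(ℂ)`. -/
theorem case21_singular_lines (b c : ℂ) (η : Fin 10 → ℂ)
    (hη : η = ![0, 0, 0, 0, b, b, c, c, -b - c, -b - c]) :
    eval η (esymm (Fin 10) ℂ 1) = 0 ∧
    ∃ μ : ℂ, ∀ i, eval η (pderiv i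
      (C (2 : ℂ) * esymm (Fin 10) ℂ 5
        + C (-1 : ℂ) * (esymm (Fin 10) ℂ 2 * esymm (Fin 10) ℂ 3))) = μ := by
  have hS (k : ℕ) : eval η (esymm (Fin 10) ℂ k) =
      Multiset.esymm ↑[0, 0, 0, 0, b, b, c, c, -b - c, -b - c] k := by
    subst hη
    exact aeval_esymm_eq_multiset_esymm (σ := Fin 10) (R := ℂ) k _
  obtain ⟨hS1, hS2, hS3⟩ : eval η (esymm (Fin 10) ℂ 1) = 0 ∧
      eval η (esymm (Fin 10) ℂ 2) = -2 * (b ^ 2 + b * c + c ^ 2) ∧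
      eval η (esymm (Fin 10) ℂ 3) = -2 * b * c * (b + c) := by
    simp only [hS, ← Multiset.cons_coe, Multiset.coe_nil, Multiset.esymm_cons_succ_s11,
      Multiset.esymm_zero_right_s11, Multiset.esymm_zero_left_succ_s11]
    exact ⟨by ring, by ring, by ring⟩
  refine ⟨hS1, 2 * eval η (esymm (Fin 10) ℂ 4) - eval η (esymm (Fin 10) ℂ 2) ^ 2, fun i => ?_⟩
  rw [eval_pderiv_C_mul_esymm_five_add_C_mul_esymm_two_mul_esymm_three, hS1, hS2, hS3]
  subst hη
  fin_cases i <;> simp <;> ring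
end
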